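/- arXiv:1805.04894 — 3 statements merged into one kernel-verified Lean document; each statement's English description precedes it below -/
import Mathlib

section
/- Let Φ : ℂ × ℍ → ℂ be a meromorphic Jacobi form of weight m and index 0 for a subgroup Γ ≤ SL₂(ℤ), and let z₀(τ) = x₀ + y₀τ with x₀, y₀ ∈ ℚ. If Φ is holomorphic at z₀(τ) for all τ, then the k-th Taylor coefficient of Φ in z at z = z₀(τ) transforms as a meromorphic modular form of weight m + k for the subgroup of γ ∈ Γ fixing x₀ + y₀τ modulo ℤ ⊕ ℤτ. -/
open Filter Topology

private lemma analyticAt_deriv' {f : ℂ → ℂ} {x : ℂ} (h : AnalyticAt ℂ f x) :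
    AnalyticAt ℂ (deriv f) x := by
  obtain ⟨U, hU, hUo, hxU⟩ := eventually_nhds_iff.mp h.eventually_analyticAt
  exact (AnalyticOnNhd.deriv (fun y hy => hU y hy)) x hxU

private lemma analyticAt_iteratedDeriv' {f : ℂ → ℂ} {x : ℂ} (h : AnalyticAt ℂ f x) (n : ℕ) :
    AnalyticAt ℂ (iteratedDeriv n f) x := by
  induction n with
  | zero => simpa using h
  | succ n ih => rw [iteratedDeriv_succ]; exact analyticAt_deriv' ih

private lemma aux_scale (f : ℂ → ℂ) (A C : ℂ) (n : ℕ) :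
    ∀ x : ℂ, AnalyticAt ℂ f (C * x) →
      iteratedDeriv n (fun y => A * f (C * y)) x = A * C ^ n * iteratedDeriv n f (C * x) := by
  induction n with
  | zero => intro x _; simp
  | succ n ih =>
    intro x h
    have hev : (fun y => iteratedDeriv n (fun y => A * f (C * y)) y)
        =ᶠ[𝓝 x] fun y => A * C ^ n * iteratedDeriv n f (C * y) := by
      have hcont : Filter.Tendsto (fun y : ℂ => C * y) (𝓝 x) (𝓝 (C * x)) :=
        (continuous_const.mul continuous_id).continuousAt
      filter_upwards [hcont.eventually h.eventually_analyticAt] with y hy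
      exact ih y hy
    rw [iteratedDeriv_succ, hev.deriv_eq]
    have hd : HasDerivAt (iteratedDeriv n f) (deriv (iteratedDeriv n f) (C * x)) (C * x) :=
      ((analyticAt_iteratedDeriv' h n).differentiableAt).hasDerivAt
    have hcy : HasDerivAt (fun y : ℂ => iteratedDeriv n f (C * y))
        (deriv (iteratedDeriv n f) (C * x) * C) x := by
      have hid : HasDerivAt (fun y : ℂ => C * y) C x := by
        simpa using (hasDerivAt_id x).const_mul C
      exact HasDerivAt.comp x hd hid
    have := (hcy.const_mul (A * C ^ n)).deriv
    rw [this, iteratedDeriv_succ]; ring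

/-- Let `Φ : ℂ × ℍ → ℂ` be a meromorphic Jacobi form of weight `m` and
index `0` for a subgroup `Γ ≤ SL₂(ℤ)` (encoded by quantifying over a matrix
`(a b; c d)` with `ad - bc = 1` satisfying the transformation laws), and let
`z₀(τ) = x₀ + y₀τ` with `x₀, y₀ ∈ ℚ`.  If `Φ(·, τ)` is holomorphic at `z₀(τ)` for all
`τ ∈ ℍ` and the matrix fixes `x₀ + y₀τ` modulo `ℤ ⊕ ℤτ`, then the `k`-th Taylor
coefficient `c_k(τ) = (1/k!)(∂_z^k Φ)(z₀(τ), τ)` transforms as a (meromorphic) modular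
form of weight `m + k`. -/
theorem jacobi_form_taylor_coefficient_modularity
    (Φ : ℂ → ℂ → ℂ) (m : ℤ) (k : ℕ) (x₀ y₀ : ℚ)
    (a b c d : ℤ) (hdet : a * d - b * c = 1)
    (hmod : ∀ τ : ℂ, 0 < τ.im → ∀ z : ℂ,
      Φ (z / ((c : ℂ) * τ + d)) (((a : ℂ) * τ + b) / ((c : ℂ) * τ + d)) =
        ((c : ℂ) * τ + d) ^ m * Φ z τ)
    (hell : ∀ τ : ℂ, 0 < τ.im → ∀ z : ℂ, ∀ p q : ℤ,
      Φ (z + (p : ℂ) * τ + (q : ℂ)) τ = Φ z τ)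
    (hhol : ∀ τ : ℂ, 0 < τ.im → AnalyticAt ℂ (fun z => Φ z τ) ((x₀ : ℂ) + (y₀ : ℂ) * τ))
    (hstab : ∀ τ : ℂ, 0 < τ.im → ∃ p q : ℤ,
      (x₀ : ℂ) + (y₀ : ℂ) * (((a : ℂ) * τ + b) / ((c : ℂ) * τ + d)) =
        ((x₀ : ℂ) + (y₀ : ℂ) * τ) / ((c : ℂ) * τ + d) +
          (p : ℂ) * (((a : ℂ) * τ + b) / ((c : ℂ) * τ + d)) + (q : ℂ)) :
    ∀ τ : ℂ, 0 < τ.im →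
      (1 / (k.factorial : ℂ)) *
          iteratedDeriv k (fun z => Φ z (((a : ℂ) * τ + b) / ((c : ℂ) * τ + d)))
            ((x₀ : ℂ) + (y₀ : ℂ) * (((a : ℂ) * τ + b) / ((c : ℂ) * τ + d))) =
        ((c : ℂ) * τ + d) ^ (m + (k : ℤ)) *
          ((1 / (k.factorial : ℂ)) *
            iteratedDeriv k (fun z => Φ z τ) ((x₀ : ℂ) + (y₀ : ℂ) * τ)) := by
  intro τ hτ
  set D : ℂ := (c : ℂ) * τ + d with hDdef
  set τ' : ℂ := ((a : ℂ) * τ + b) / D with hτ'def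
  set w₀ : ℂ := (x₀ : ℂ) + (y₀ : ℂ) * τ with hw₀def
  -- D ≠ 0
  have hD : D ≠ 0 := by
    intro h0
    have him : D.im = (c : ℝ) * τ.im := by
      simp [hDdef, Complex.add_im, Complex.mul_im]
    have hc : (c : ℝ) = 0 := by
      rw [h0] at him
      simp only [Complex.zero_im] at him
      rcases mul_eq_zero.mp him.symm with h | h
      · exact h
      · exact absurd h (ne_of_gt hτ)
    have hcz : c = 0 := by exact_mod_cast hc
    have hd0 : (d : ℂ) = 0 := by
      rw [hDdef, hcz] at h0; simpa using h0
    have hdz : d = 0 := by exact_mod_cast hd0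
    rw [hcz, hdz] at hdet; simp at hdet
  -- positivity of im τ'
  have hdetR : (a : ℝ) * d - b * c = 1 := by exact_mod_cast hdet
  have hτ' : 0 < τ'.im := by
    have hnsq : 0 < Complex.normSq D := Complex.normSq_pos.mpr hD
    have him : τ'.im = ((a : ℝ) * d - b * c) * τ.im / Complex.normSq D := by
      rw [hτ'def, Complex.div_im, hDdef]
      simp only [Complex.add_im, Complex.add_re, Complex.mul_im, Complex.mul_re,
        Complex.intCast_im, Complex.intCast_re]
      ring
    rw [him, hdetR, one_mul]
    exact div_pos hτ hnsq
  obtain ⟨p, q, hpq⟩ := hstab τ hτ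
  -- ellipticity at τ'
  have hshift : (fun z : ℂ => Φ (z + ((p : ℂ) * τ' + q)) τ') = fun z => Φ z τ' := by
    funext z
    rw [← add_assoc]
    exact hell τ' hτ' z p q
  have hw : (x₀ : ℂ) + (y₀ : ℂ) * τ' = w₀ / D + ((p : ℂ) * τ' + q) := by
    rw [hpq]; ring
  have step1 : iteratedDeriv k (fun z => Φ z τ') ((x₀ : ℂ) + (y₀ : ℂ) * τ') =
      iteratedDeriv k (fun z => Φ z τ') (w₀ / D) := by
    have h1 := congrFun (iteratedDeriv_comp_add_const k (fun z => Φ z τ') ((p : ℂ) * τ' + q))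
      (w₀ / D)
    rw [hw, ← h1]
    exact congrArg (fun f => iteratedDeriv k f (w₀ / D)) hshift
  -- modularity: Φ z τ' = D^m * Φ (D*z) τ
  have hfun : (fun z : ℂ => Φ z τ') = fun z => D ^ m * Φ (D * z) τ := by
    funext z
    have := hmod τ hτ (D * z)
    rwa [mul_div_cancel_left₀ _ hD] at this
  have hcan : D * (w₀ / D) = w₀ := by field_simp
  have step2 : iteratedDeriv k (fun z => Φ z τ') (w₀ / D) =
      D ^ m * D ^ k * iteratedDeriv k (fun z => Φ z τ) w₀ := by
    rw [hfun]
    have := aux_scale (fun z => Φ z τ) (D ^ m) D k (w₀ / D) (by rw [hcan]; exact hhol τ hτ)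
    rw [this, hcan]
  rw [step1, step2, zpow_add₀ hD, zpow_natCast]
  ring
end

section
/- For the one-parameter family of mirror curves of K_{WP[1,1,2]} with b₄ = 0, the j-invariant is j = (s - 48)³/(s - 64) where s = b₀⁴; in particular j depends on b₀ only through b₀⁴. -/
/-- For the one-parameter family of mirror curves of `K_{WP[1,1,2]}`
with `b₄ = 0`, whose Weierstrass form `Y² = 4X³ - aX - b` has
`a = (b₀⁴ - 48)/(2^{1/3}·24·κ⁴)` and `b = -b₀²(b₀⁴ - 72)/(864κ⁶)` (here `c = 2^{1/3}`,
`κ ≠ 0` a scaling constant), the `j`-invariant `j = 1728a³/(a³ - 27b²)` equals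
`(s - 48)³/(s - 64)` where `s = b₀⁴`; in particular `j` depends on `b₀` only
through `b₀⁴`. -/
theorem j_invariant_KWP112_b4_zero (b₀ κ c : ℂ) (hκ : κ ≠ 0) (hc : c ^ 3 = 2)
    (hsm : b₀ ^ 4 ≠ 64) :
    (fun a b => 1728 * a ^ 3 / (a ^ 3 - 27 * b ^ 2))
        ((b₀ ^ 4 - 48) / (c * 24 * κ ^ 4))
        (-(b₀ ^ 2 * (b₀ ^ 4 - 72)) / (864 * κ ^ 6)) =
      (b₀ ^ 4 - 48) ^ 3 / (b₀ ^ 4 - 64) := by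
  simp only
  have ha : ((b₀ ^ 4 - 48) / (c * 24 * κ ^ 4)) ^ 3
      = (b₀ ^ 4 - 48) ^ 3 / (27648 * κ ^ 12) := by
    rw [div_pow, mul_pow, mul_pow, hc]; ring_nf
  rw [ha]
  have hs : b₀ ^ 4 - 64 ≠ 0 := sub_ne_zero.mpr hsm
  have hD : (b₀ ^ 4 - 48) ^ 3 / (27648 * κ ^ 12)
      - 27 * (-(b₀ ^ 2 * (b₀ ^ 4 - 72)) / (864 * κ ^ 6)) ^ 2
      = (b₀ ^ 4 - 64) / (16 * κ ^ 12) := by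
    field_simp
    ring
  rw [hD]
  field_simp
  ring
end

section
/- For the K_{ℙ¹×ℙ¹} mirror curve y² + (1 + x + q₁x²)y + q₂x² = 0, the j-invariant of the associated elliptic curve equals (s-16)³/(s-32) where s = (16(q₁² + q₂²) - 8(q₁ + q₂) + 1)/(q₁q₂); hence j depends on (q₁,q₂) only through s. -/
/-!
Both `a³` and `27 b²` equal `1 / (27648 κ¹²)` times `A³` and `B²` respectively, where `A` and `B`
are the numerators of `a` and `b` (this uses `c³ = 2` and `864² = 27 · 27648`). Hence
`j = 1728 A³ / (A³ - B²)`, and the discriminant factors as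
`A³ - B² = 1728 (q₁q₂)² (A - 16 q₁q₂)`. Since `s - 16 = A / (q₁q₂)` and
`s - 32 = (A - 16 q₁q₂) / (q₁q₂)`, this is `(s - 16)³ / (s - 32)`.
-/

theorem jInvariant_eq_of_cube_sq_eq_mul {K : Type*} [Field K] {a b A B t : K} (ht : t ≠ 0)
    (ha : a ^ 3 = t * A ^ 3) (hb : 27 * b ^ 2 = t * B ^ 2) :
    1728 * a ^ 3 / (a ^ 3 - 27 * b ^ 2) = 1728 * A ^ 3 / (A ^ 3 - B ^ 2) := by
  rw [ha, hb, ← mul_sub, mul_left_comm, mul_div_mul_left _ _ ht]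

theorem div_pow_three_div_div {K : Type*} [Field K] (x y : K) {p : K} (hp : p ≠ 0) :
    (x / p) ^ 3 / (y / p) = x ^ 3 / (p ^ 2 * y) := by
  rw [div_pow, div_div_div_eq, pow_succ p 2, mul_right_comm, mul_div_mul_right _ _ hp]

theorem KP1xP1_discriminant {R : Type*} [CommRing R] (q₁ q₂ : R) :
    (16 * q₁ ^ 2 - 16 * q₁ * q₂ + 16 * q₂ ^ 2 - 8 * q₁ - 8 * q₂ + 1) ^ 3 -
        ((4 * q₁ + 4 * q₂ - 1) *
          (16 * q₁ ^ 2 - 40 * q₁ * q₂ + 16 * q₂ ^ 2 - 8 * q₁ - 8 * q₂ + 1)) ^ 2 =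
      1728 * (q₁ * q₂) ^ 2 *
        (16 * q₁ ^ 2 - 16 * q₁ * q₂ + 16 * q₂ ^ 2 - 8 * q₁ - 8 * q₂ + 1 - 16 * (q₁ * q₂)) := by
  ring

theorem j_invariant_KP1xP1_general (q₁ q₂ κ c : ℂ)
    (hq₁ : q₁ ≠ 0) (hq₂ : q₂ ≠ 0) (hκ : κ ≠ 0) (hc : c ^ 3 = 2) :
    (fun a b => 1728 * a ^ 3 / (a ^ 3 - 27 * b ^ 2))
        ((16 * q₁ ^ 2 - 16 * q₁ * q₂ + 16 * q₂ ^ 2 - 8 * q₁ - 8 * q₂ + 1) /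
          (c * 24 * κ ^ 4))
        ((4 * q₁ + 4 * q₂ - 1) *
            (16 * q₁ ^ 2 - 40 * q₁ * q₂ + 16 * q₂ ^ 2 - 8 * q₁ - 8 * q₂ + 1) /
          (864 * κ ^ 6)) =
      ((16 * (q₁ ^ 2 + q₂ ^ 2) - 8 * (q₁ + q₂) + 1) / (q₁ * q₂) - 16) ^ 3 /
        ((16 * (q₁ ^ 2 + q₂ ^ 2) - 8 * (q₁ + q₂) + 1) / (q₁ * q₂) - 32) := by
  set A := 16 * q₁ ^ 2 - 16 * q₁ * q₂ + 16 * q₂ ^ 2 - 8 * q₁ - 8 * q₂ + 1 with hA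
  set B := (4 * q₁ + 4 * q₂ - 1) *
    (16 * q₁ ^ 2 - 40 * q₁ * q₂ + 16 * q₂ ^ 2 - 8 * q₁ - 8 * q₂ + 1)
  set s := (16 * (q₁ ^ 2 + q₂ ^ 2) - 8 * (q₁ + q₂) + 1) / (q₁ * q₂) with hs
  have hq : q₁ * q₂ ≠ 0 := mul_ne_zero hq₁ hq₂
  have hs16 : s - 16 = A / (q₁ * q₂) := by
    rw [hs, hA]; field_simp; ring
  have hs32 : s - 32 = (A - 16 * (q₁ * q₂)) / (q₁ * q₂) := by
    rw [hs, hA]; field_simp; ring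
  have ht : (27648 * κ ^ 12)⁻¹ ≠ 0 := inv_ne_zero (mul_ne_zero (by norm_num) (pow_ne_zero 12 hκ))
  have ha : (A / (c * 24 * κ ^ 4)) ^ 3 = (27648 * κ ^ 12)⁻¹ * A ^ 3 := by
    rw [div_pow, mul_pow, mul_pow, hc]; field_simp; ring
  have hb : 27 * (B / (864 * κ ^ 6)) ^ 2 = (27648 * κ ^ 12)⁻¹ * B ^ 2 := by
    field_simp; ring
  have hdisc : A ^ 3 - B ^ 2 = 1728 * (q₁ * q₂) ^ 2 * (A - 16 * (q₁ * q₂)) :=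
    KP1xP1_discriminant q₁ q₂
  beta_reduce
  rw [jInvariant_eq_of_cube_sq_eq_mul ht ha hb, hdisc, mul_assoc (1728 : ℂ),
    mul_div_mul_left _ _ (by norm_num), hs16, hs32, div_pow_three_div_div _ _ hq]

/-- For the `K_{ℙ¹×ℙ¹}` mirror curve
`y² + (1 + x + q₁x²)y + q₂x² = 0` (with `q₁, q₂ ∈ ℂ*`), whose associated elliptic curve
is the Weierstrass form `Y² = 4X³ - aX - b` with
`a = (16q₁² - 16q₁q₂ + 16q₂² - 8q₁ - 8q₂ + 1)/(2^{1/3}·24·κ⁴)` and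
`b = (4q₁ + 4q₂ - 1)(16q₁² - 40q₁q₂ + 16q₂² - 8q₁ - 8q₂ + 1)/(864κ⁶)`
(here `c = 2^{1/3}` and `κ ≠ 0`), the `j`-invariant `j = 1728a³/(a³ - 27b²)` equals
`(s - 16)³/(s - 32)` where `s = (16(q₁² + q₂²) - 8(q₁ + q₂) + 1)/(q₁q₂)`; hence `j`
depends on `(q₁, q₂)` only through `s`. -/
theorem j_invariant_KP1xP1 (q₁ q₂ κ c : ℂ)
    (hq₁ : q₁ ≠ 0) (hq₂ : q₂ ≠ 0) (hκ : κ ≠ 0) (hc : c ^ 3 = 2)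
    (hsm : (16 * (q₁ ^ 2 + q₂ ^ 2) - 8 * (q₁ + q₂) + 1) / (q₁ * q₂) ≠ 32) :
    (fun a b => 1728 * a ^ 3 / (a ^ 3 - 27 * b ^ 2))
        ((16 * q₁ ^ 2 - 16 * q₁ * q₂ + 16 * q₂ ^ 2 - 8 * q₁ - 8 * q₂ + 1) /
          (c * 24 * κ ^ 4))
        ((4 * q₁ + 4 * q₂ - 1) *
            (16 * q₁ ^ 2 - 40 * q₁ * q₂ + 16 * q₂ ^ 2 - 8 * q₁ - 8 * q₂ + 1) /
          (864 * κ ^ 6)) =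
      ((16 * (q₁ ^ 2 + q₂ ^ 2) - 8 * (q₁ + q₂) + 1) / (q₁ * q₂) - 16) ^ 3 /
        ((16 * (q₁ ^ 2 + q₂ ^ 2) - 8 * (q₁ + q₂) + 1) / (q₁ * q₂) - 32) :=
  j_invariant_KP1xP1_general q₁ q₂ κ c hq₁ hq₂ hκ hc
end
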